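/- Let R be a commutative ring and M an R-module that is universally torsionless. Then for every injective map of R-modules Q' → Q the induced map M ⊗_R Q' → M ⊗_R Q is injective, i.e., M is flat. -/

import Mathlib

open TensorProduct

/-- The natural map `M ⊗ N → Hom(M*, N)`, `m ⊗ n ↦ (w ↦ w m • n)`. -/
noncomputable def natMap (R : Type*) [CommRing R] (M : Type*) [AddCommGroup M] [Module R M]
    (N : Type*) [AddCommGroup N] [Module R N] :
    M ⊗[R] N →ₗ[R] ((M →ₗ[R] R) →ₗ[R] N) :=
  (dualTensorHom R (Module.Dual R M) N).comp (LinearMap.rTensor N (Module.Dual.eval R M))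

lemma natMap_tmul {R : Type*} [CommRing R] {M : Type*} [AddCommGroup M] [Module R M]
    {N : Type*} [AddCommGroup N] [Module R N] (m : M) (n : N) (w : M →ₗ[R] R) :
    natMap R M N (m ⊗ₜ[R] n) w = w m • n := by
  simp [natMap]

/-- Naturality of `natMap` in `N`. -/
lemma natMap_naturality {R : Type*} [CommRing R] {M : Type*} [AddCommGroup M] [Module R M]
    {N N' : Type*} [AddCommGroup N] [Module R N] [AddCommGroup N'] [Module R N']
    (f : N →ₗ[R] N') (t : M ⊗[R] N) (w : M →ₗ[R] R) :
    natMap R M N' (LinearMap.lTensor M f t) w = f (natMap R M N t w) := by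
  induction t using TensorProduct.induction_on with
  | zero => simp
  | tmul m n => simp [natMap_tmul]
  | add x y hx hy => simp [map_add, hx, hy]

/-- If `natMap` is injective for all modules in the same universe as `M`, then it is
injective for modules in any universe: the key reduction goes through the character module
`Hom_ℤ(M, ℚ/ℤ)`, which lives in the universe of `M`. -/
lemma natMap_injective_of_small {R : Type u} [CommRing R] {M : Type v} [AddCommGroup M]
    [Module R M]
    (h : ∀ (N : Type v) [AddCommGroup N] [Module R N], Function.Injective (natMap R M N))
    (N : Type w) [AddCommGroup N] [Module R N] : Function.Injective (natMap R M N) := by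
  rw [injective_iff_map_eq_zero]
  intro t ht
  by_contra htne
  obtain ⟨Χ, hΧ⟩ := CharacterModule.exists_character_apply_ne_zero_of_ne_zero htne
  -- the character of `N ⊗ M` given by `n ⊗ m ↦ Χ (m ⊗ n)`
  set Χ' : CharacterModule (N ⊗[R] M) :=
    Χ.comp (TensorProduct.comm R N M).toLinearMap.toAddMonoidHom with hΧ'
  -- curry it to a linear map `N →ₗ CharacterModule M`
  set f : N →ₗ[R] CharacterModule M := CharacterModule.curry Χ' with hf
  have hfapp : ∀ (n : N) (m : M), f n m = Χ (m ⊗ₜ[R] n) := fun n m => rfl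
  -- push `t` into `M ⊗ CharacterModule M`
  set γ : M ⊗[R] CharacterModule M := LinearMap.lTensor M f t with hγ
  have hγ0 : γ = 0 := by
    apply h (CharacterModule M)
    ext w
    rw [hγ, natMap_naturality]
    have : natMap R M N t = 0 := ht
    rw [this]
    simp
  -- the evaluation character on `M ⊗ CharacterModule M`
  set e : CharacterModule (M ⊗[R] CharacterModule M) :=
    (CharacterModule.uncurry (LinearMap.id : CharacterModule M →ₗ[R] CharacterModule M)).comp
      (TensorProduct.comm R M (CharacterModule M)).toLinearMap.toAddMonoidHom with he
  have key : ∀ s : M ⊗[R] N, e (LinearMap.lTensor M f s) = Χ s := by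
    intro s
    induction s using TensorProduct.induction_on with
    | zero => simp
    | tmul m n =>
        rw [LinearMap.lTensor_tmul]
        show (CharacterModule.uncurry LinearMap.id)
          ((TensorProduct.comm R M (CharacterModule M)) (m ⊗ₜ[R] f n)) = Χ (m ⊗ₜ[R] n)
        rw [TensorProduct.comm_tmul, CharacterModule.uncurry_apply]
        erw [TensorProduct.liftAddHom_tmul]
    | add x y hx hy => simp only [map_add, hx, hy]
  have : Χ t = 0 := by rw [← key t, ← hγ, hγ0, map_zero]
  exact hΧ this

/-- Universally torsionless modules are flat. -/
theorem stmt17 (R : Type u) [CommRing R] (M : Type v) [AddCommGroup M] [Module R M]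
    (h : ∀ (N : Type v) [AddCommGroup N] [Module R N], Function.Injective (natMap R M N)) :
    Module.Flat R M := by
  rw [Module.Flat.iff_lTensor_injective']
  intro I
  rw [injective_iff_map_eq_zero]
  intro t ht
  apply natMap_injective_of_small h I
  rw [map_zero]
  ext w
  have h1 : natMap R M R (LinearMap.lTensor M I.subtype t) w
      = I.subtype (natMap R M I t w) := natMap_naturality I.subtype t w
  rw [ht, map_zero] at h1
  simpa using (Submodule.injective_subtype I (a₁ := natMap R M I t w) (a₂ := 0) (by simpa using h1.symm))
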